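/- arXiv:1906.03671 — 2 statements merged into one kernel-verified Lean document; each statement's English description precedes it below -/
import Mathlib

section
/- Let K ≥ 1, let p ∈ ℝ^K be a probability vector (p_i ≥ 0 for all i and Σ_{i=1}^K p_i = 1), let z ∈ ℝ^d, and for each label y ∈ {1,…,K} let g^y ∈ ℝ^{K×d} be the matrix whose i-th row is (p_i − 𝟙[y = i]) · z. If ŷ ∈ {1,…,K} satisfies p_ŷ = max_{y ∈ {1,…,K}} p_y, then ŷ minimizes the gradient norm over labels: for every y ∈ {1,…,K}, ‖g^{ŷ}‖ ≤ ‖g^y‖, where ‖·‖ denotes the Euclidean (Frobenius) norm. -/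
open Finset

theorem sum_sub_ite_sq {ι : Type*} [Fintype ι] [DecidableEq ι] (p : ι → ℝ) (y : ι) :
    ∑ i, (p i - if y = i then 1 else 0) ^ 2 = ∑ i, p i ^ 2 - 2 * p y + 1 := by
  have expand : ∀ i, (p i - if y = i then (1 : ℝ) else 0) ^ 2
      = p i ^ 2 - 2 * (if y = i then p i else 0) + (if y = i then 1 else 0) := by
    intro i
    split_ifs <;> ring
  simp only [expand, sum_add_distrib, sum_sub_distrib, ← mul_sum, sum_ite_eq, mem_univ,
    if_true]

theorem EuclideanSpace.norm_eq_sqrt_mul_norm_of_apply_eq_mul {ι κ : Type*} [Fintype ι]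
    [Fintype κ] (a : ι → ℝ) (b : EuclideanSpace ℝ κ) (v : EuclideanSpace ℝ (ι × κ))
    (hv : ∀ i l, v (i, l) = a i * b l) :
    ‖v‖ = √(∑ i, a i ^ 2) * ‖b‖ := by
  have hb : ‖b‖ = √(∑ l, b l ^ 2) := by
    simp only [EuclideanSpace.norm_eq, Real.norm_eq_abs, sq_abs]
  rw [hb, ← Real.sqrt_mul (sum_nonneg fun i _ => sq_nonneg (a i)), EuclideanSpace.norm_eq,
    Fintype.sum_prod_type, sum_mul]
  simp only [Real.norm_eq_abs, sq_abs, hv, mul_pow, mul_sum]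

theorem hallucinated_label_min_gradient_norm_general
    (K d : ℕ)
    (p : Fin K → ℝ)
    (z : EuclideanSpace ℝ (Fin d))
    (g : Fin K → EuclideanSpace ℝ (Fin K × Fin d))
    (hg : ∀ y : Fin K, ∀ i : Fin K, ∀ l : Fin d,
      g y (i, l) = (p i - if y = i then 1 else 0) * z l)
    (yhat : Fin K) (hyhat : ∀ y : Fin K, p y ≤ p yhat) :
    ∀ y : Fin K, ‖g yhat‖ ≤ ‖g y‖ := by
  intro y
  simp only [EuclideanSpace.norm_eq_sqrt_mul_norm_of_apply_eq_mul _ z _ (hg _), sum_sub_ite_sq]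
  gcongr
  exact hyhat y

/-- If `ŷ` attains the maximal predicted probability of a probability vector `p`,
then the hallucinated-label gradient `g^ŷ` (with `i`-th row `(p_i − 𝟙[ŷ = i]) • z`,
viewed in `EuclideanSpace ℝ (Fin K × Fin d)` whose norm is the Frobenius norm)
has the smallest norm among all `g^y`. -/
theorem hallucinated_label_min_gradient_norm
    (K d : ℕ) (hK : 1 ≤ K)
    (p : Fin K → ℝ) (hp_nonneg : ∀ i, 0 ≤ p i) (hp_sum : ∑ i, p i = 1)
    (z : EuclideanSpace ℝ (Fin d))
    (g : Fin K → EuclideanSpace ℝ (Fin K × Fin d))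
    (hg : ∀ y : Fin K, ∀ i : Fin K, ∀ l : Fin d,
      g y (i, l) = (p i - if y = i then 1 else 0) * z l)
    (yhat : Fin K) (hyhat : ∀ y : Fin K, p y ≤ p yhat) :
    ∀ y : Fin K, ‖g yhat‖ ≤ ‖g y‖ :=
  hallucinated_label_min_gradient_norm_general K d p z g hg yhat hyhat
end

section
/- Let K ≥ 1, let p ∈ ℝ^K be a probability vector (p_i ≥ 0 for all i and Σ_{i=1}^K p_i = 1), let z ∈ ℝ^d, and let ŷ ∈ {1,…,K} satisfy p_ŷ = max_{y} p_y. Let g ∈ ℝ^{K×d} be the matrix whose i-th row is (p_i − 𝟙[ŷ = i]) · z (the hallucinated-label gradient embedding). Then ‖g‖² ≤ (1 − p_ŷ) · ‖z‖². In particular, if the model is fully confident, i.e. p_ŷ = 1, then g = 0. -/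
/-!
The squared Frobenius norm of the rank-one matrix `g = (p - e_ŷ) zᵀ` factors as
`‖p - e_ŷ‖² ‖z‖²`, and `‖p - e_ŷ‖² = (1 - p_ŷ)² + ∑_{i ≠ ŷ} p_i²`. Since every `p_i` is at most
`p_ŷ`, the tail is at most `p_ŷ ∑_{i ≠ ŷ} p_i = p_ŷ (1 - p_ŷ)`, and the two terms add up to
`1 - p_ŷ`.
-/

open Finset

theorem EuclideanSpace.norm_sq_of_apply_eq_mul {ι κ : Type*} [Fintype ι] [Fintype κ]
    (a : ι → ℝ) (z : EuclideanSpace ℝ κ) (g : EuclideanSpace ℝ (ι × κ))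
    (hg : ∀ i l, g (i, l) = a i * z l) :
    ‖g‖ ^ 2 = (∑ i, a i ^ 2) * ‖z‖ ^ 2 := by
  simp only [EuclideanSpace.norm_sq_eq, Real.norm_eq_abs, sq_abs, Fintype.sum_prod_type, hg,
    mul_pow, Finset.sum_mul_sum]

theorem sum_sq_le_mul_sum_of_le {ι : Type*} (s : Finset ι) (f : ι → ℝ) {M : ℝ}
    (hf_nonneg : ∀ i ∈ s, 0 ≤ f i) (hf_le : ∀ i ∈ s, f i ≤ M) :
    ∑ i ∈ s, f i ^ 2 ≤ M * ∑ i ∈ s, f i := by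
  rw [Finset.mul_sum]
  exact sum_le_sum fun i hi => by
    rw [sq]; exact mul_le_mul_of_nonneg_right (hf_le i hi) (hf_nonneg i hi)

theorem sum_sq_sub_indicator_le_of_isMax {ι : Type*} [Fintype ι] [DecidableEq ι]
    (p : ι → ℝ) (hp_nonneg : ∀ i, 0 ≤ p i) (hp_sum : ∑ i, p i = 1)
    (j : ι) (hj : ∀ i, p i ≤ p j) :
    ∑ i, (p i - if j = i then 1 else 0) ^ 2 ≤ 1 - p j := by
  have hrest : ∑ i ∈ univ.erase j, p i = 1 - p j := by
    rw [sum_erase_eq_sub (mem_univ j), hp_sum]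
  have htail : ∑ i ∈ univ.erase j, (p i - if j = i then 1 else 0) ^ 2 ≤ p j * (1 - p j) := by
    rw [← hrest]
    calc ∑ i ∈ univ.erase j, (p i - if j = i then 1 else 0) ^ 2
        = ∑ i ∈ univ.erase j, p i ^ 2 :=
          sum_congr rfl fun i hi => by rw [if_neg (ne_of_mem_erase hi).symm, sub_zero]
      _ ≤ p j * ∑ i ∈ univ.erase j, p i :=
          sum_sq_le_mul_sum_of_le _ _ (fun i _ => hp_nonneg i) (fun i _ => hj i)
  rw [← add_sum_erase _ _ (mem_univ j), if_pos rfl]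
  linarith [show (p j - 1) ^ 2 + p j * (1 - p j) = 1 - p j by ring]

theorem confident_gradient_embedding_small_general
    (K d : ℕ)
    (p : Fin K → ℝ) (hp_nonneg : ∀ i, 0 ≤ p i) (hp_sum : ∑ i, p i = 1)
    (z : EuclideanSpace ℝ (Fin d))
    (yhat : Fin K) (hyhat : ∀ y : Fin K, p y ≤ p yhat)
    (g : EuclideanSpace ℝ (Fin K × Fin d))
    (hg : ∀ i : Fin K, ∀ l : Fin d,
      g (i, l) = (p i - if yhat = i then 1 else 0) * z l) :
    ‖g‖ ^ 2 ≤ (1 - p yhat) * ‖z‖ ^ 2 ∧ (p yhat = 1 → g = 0) := by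
  have hbound : ‖g‖ ^ 2 ≤ (1 - p yhat) * ‖z‖ ^ 2 := by
    rw [EuclideanSpace.norm_sq_of_apply_eq_mul _ z g hg]
    exact mul_le_mul_of_nonneg_right
      (sum_sq_sub_indicator_le_of_isMax p hp_nonneg hp_sum yhat hyhat) (sq_nonneg _)
  refine ⟨hbound, fun hconf => ?_⟩
  rw [hconf, sub_self, zero_mul] at hbound
  exact norm_eq_zero.mp (pow_eq_zero_iff two_ne_zero |>.mp (le_antisymm hbound (sq_nonneg _)))

/-- If `ŷ` attains the maximal predicted probability of a probability vector `p`, then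
the hallucinated-label gradient embedding `g` (with `i`-th row `(p_i − 𝟙[ŷ = i]) • z`,
viewed in `EuclideanSpace ℝ (Fin K × Fin d)` whose norm is the Frobenius norm) satisfies
`‖g‖² ≤ (1 − p_ŷ) ‖z‖²`; in particular if `p_ŷ = 1` then `g = 0`. -/
theorem confident_gradient_embedding_small
    (K d : ℕ) (hK : 1 ≤ K)
    (p : Fin K → ℝ) (hp_nonneg : ∀ i, 0 ≤ p i) (hp_sum : ∑ i, p i = 1)
    (z : EuclideanSpace ℝ (Fin d))
    (yhat : Fin K) (hyhat : ∀ y : Fin K, p y ≤ p yhat)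
    (g : EuclideanSpace ℝ (Fin K × Fin d))
    (hg : ∀ i : Fin K, ∀ l : Fin d,
      g (i, l) = (p i - if yhat = i then 1 else 0) * z l) :
    ‖g‖ ^ 2 ≤ (1 - p yhat) * ‖z‖ ^ 2 ∧ (p yhat = 1 → g = 0) :=
  confident_gradient_embedding_small_general K d p hp_nonneg hp_sum z yhat hyhat g hg
end
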